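/- Let Ω ⊂ ℝⁿ⁺¹ be an open set with quasi-lateral boundary Σ, let σ be a Borel measure on ℝⁿ⁺¹ supported in Σ, let Q be a parabolic cube, and let c > 0. Suppose σ(Q_ρ⁻(z,τ) ∩ Σ) ≥ c·ρⁿ⁺¹ for every (z,τ) ∈ Σ and every ρ > 0 with Q_ρ(z,τ) ⊂ Q. Then no point of Σ ∩ Q belongs to the abnormal boundary ∂ₐΩ; consequently Σ ∩ Q ⊂ 𝒫Ω, the parabolic boundary of Ω (in particular, Σ ∩ Q contains no singular or semi-singular boundary points). -/
import Mathlib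


open MeasureTheory Set Filter Topology

noncomputable section

/-- Points of space-time `ℝⁿ × ℝ`. -/
abbrev Pt (n : ℕ) : Type := EuclideanSpace ℝ (Fin n) × ℝ

/-- The open parabolic cube `Q_r(c)`. -/
def pcube (n : ℕ) (c : Pt n) (r : ℝ) : Set (Pt n) :=
  {p | (∀ i, |p.1 i - c.1 i| < r) ∧ c.2 - r ^ 2 < p.2 ∧ p.2 < c.2 + r ^ 2}

/-- The time-backward half cube `Q_r⁻(c)`. -/
def pcubeMinus (n : ℕ) (c : Pt n) (r : ℝ) : Set (Pt n) :=
  {p | (∀ i, |p.1 i - c.1 i| < r) ∧ c.2 - r ^ 2 < p.2 ∧ p.2 < c.2}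

/-- The time-forward half cube `Q_r⁺(c)`. -/
def pcubePlus (n : ℕ) (c : Pt n) (r : ℝ) : Set (Pt n) :=
  {p | (∀ i, |p.1 i - c.1 i| < r) ∧ c.2 < p.2 ∧ p.2 < c.2 + r ^ 2}

/-- The parabolic norm `‖(X,t)‖ = |X| + |t|^{1/2}`. -/
def pnorm (n : ℕ) (p : Pt n) : ℝ := ‖p.1‖ + Real.sqrt |p.2|

/-- The parabolic distance. -/
def pdist (n : ℕ) (p q : Pt n) : ℝ := pnorm n (p.1 - q.1, p.2 - q.2)

/-- The parabolic diameter of a set (in `ℝ≥0∞`). -/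
def pdiam (n : ℕ) (A : Set (Pt n)) : ENNReal :=
  ⨆ p ∈ A, ⨆ q ∈ A, ENNReal.ofReal (pdist n p q)

/-- The parabolic distance from a point to a set. -/
def pdistTo (n : ℕ) (p : Pt n) (A : Set (Pt n)) : ℝ := sInf ((pdist n p) '' A)

/-- The parabolic boundary `𝒫Ω`. -/
def parabolicBdry (n : ℕ) (Ω : Set (Pt n)) : Set (Pt n) :=
  {p | p ∈ frontier Ω ∧ ∀ r > 0, (pcubeMinus n p r ∩ Ωᶜ).Nonempty}

/-- The bottom boundary `ℬΩ`. -/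
def bottomBdry (n : ℕ) (Ω : Set (Pt n)) : Set (Pt n) :=
  {p | p ∈ parabolicBdry n Ω ∧ ∃ ε > 0, pcubePlus n p ε ⊆ Ω}

/-- The abnormal boundary `∂ₐΩ`. -/
def abnormalBdry (n : ℕ) (Ω : Set (Pt n)) : Set (Pt n) :=
  {p | p ∈ frontier Ω ∧ ∃ ε > 0, pcubeMinus n p ε ⊆ Ω}

/-- The singular boundary `∂ₛΩ`. -/
def singBdry (n : ℕ) (Ω : Set (Pt n)) : Set (Pt n) :=
  {p | p ∈ abnormalBdry n Ω ∧ ∃ ε > 0, pcubePlus n p ε ∩ Ω = ∅}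

/-- The essential boundary `∂ₑΩ = ∂Ω ∖ ∂ₛΩ`. -/
def essBdry (n : ℕ) (Ω : Set (Pt n)) : Set (Pt n) := frontier Ω \ singBdry n Ω

/-- `T_min(Ω)`, as an extended real number. -/
def parTmin (n : ℕ) (Ω : Set (Pt n)) : EReal := ⨅ p ∈ Ω, (p.2 : EReal)

/-- `T_max(Ω)`, as an extended real number. -/
def parTmax (n : ℕ) (Ω : Set (Pt n)) : EReal := ⨆ p ∈ Ω, (p.2 : EReal)

/-- The quasi-lateral boundary `Σ`:  `∂Ω` with the time slice of `ℬΩ` at `t = T_min(Ω)`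
removed (when `T_min(Ω) > -∞`), and the time slice of `∂ₛΩ` at `t = T_max(Ω)` removed
(when `T_max(Ω) < ∞`).  Since no real time coordinate can equal `±∞`, the `EReal`
formulation below encodes exactly this. -/
def quasiLateral (n : ℕ) (Ω : Set (Pt n)) : Set (Pt n) :=
  frontier Ω \
    ({p | p ∈ bottomBdry n Ω ∧ (p.2 : EReal) = parTmin n Ω} ∪
     {p | p ∈ singBdry n Ω ∧ (p.2 : EReal) = parTmax n Ω})

/-- The free-space heat kernel. -/
def heatKernel (n : ℕ) (X : EuclideanSpace ℝ (Fin n)) (t : ℝ)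
    (y : EuclideanSpace ℝ (Fin n)) (s : ℝ) : ℝ :=
  if s < t then
    (4 * Real.pi * (t - s)) ^ (-(n : ℝ) / 2) * Real.exp (-‖X - y‖ ^ 2 / (4 * (t - s)))
  else 0

/-- Time derivative `∂ₜ u`. -/
def timeDeriv (n : ℕ) (u : Pt n → ℝ) (p : Pt n) : ℝ := deriv (fun τ => u (p.1, τ)) p.2

/-- Spatial Laplacian `Δ_X u`. -/
def spaceLaplacian (n : ℕ) (u : Pt n → ℝ) (p : Pt n) : ℝ :=
  ∑ i : Fin n,
    iteratedDeriv 2 (fun h : ℝ => u (p.1 + h • EuclideanSpace.single i (1 : ℝ), p.2)) 0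

/-- A classical supersolution of the heat equation on `U`: continuous on `U`,
twice continuously differentiable in `X` and once in `t`, with `∂ₜ u - Δ_X u ≥ 0`. -/
structure IsSupersolutionOn (n : ℕ) (u : Pt n → ℝ) (U : Set (Pt n)) : Prop where
  cont : ContinuousOn u U
  smoothX : ∀ p ∈ U, ContDiffAt ℝ 2 (fun X => u (X, p.2)) p.1
  smoothT : ∀ p ∈ U, ContDiffAt ℝ 1 (fun τ => u (p.1, τ)) p.2
  ineq : ∀ p ∈ U, spaceLaplacian n u p ≤ timeDeriv n u p

/-- A classical subsolution of the heat equation on `U`. -/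
structure IsSubsolutionOn (n : ℕ) (u : Pt n → ℝ) (U : Set (Pt n)) : Prop where
  cont : ContinuousOn u U
  smoothX : ∀ p ∈ U, ContDiffAt ℝ 2 (fun X => u (X, p.2)) p.1
  smoothT : ∀ p ∈ U, ContDiffAt ℝ 1 (fun τ => u (p.1, τ)) p.2
  ineq : ∀ p ∈ U, timeDeriv n u p ≤ spaceLaplacian n u p

/-- A caloric function (classical solution of the heat equation) on `U`. -/
structure IsCaloricOn (n : ℕ) (u : Pt n → ℝ) (U : Set (Pt n)) : Prop where
  cont : ContinuousOn u U
  smoothX : ∀ p ∈ U, ContDiffAt ℝ 2 (fun X => u (X, p.2)) p.1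
  smoothT : ∀ p ∈ U, ContDiffAt ℝ 1 (fun τ => u (p.1, τ)) p.2
  eq : ∀ p ∈ U, timeDeriv n u p = spaceLaplacian n u p
lemma pcube_mono (n : ℕ) (z : Pt n) {r s : ℝ} (h0 : 0 ≤ r) (h : r ≤ s) :
    pcube n z r ⊆ pcube n z s := by
  intro p hp
  obtain ⟨h1, h2, h3⟩ := hp
  have hsq : r ^ 2 ≤ s ^ 2 := by nlinarith
  exact ⟨fun i => (h1 i).trans_le h, by constructor <;> linarith⟩

lemma pcubeMinus_mono (n : ℕ) (z : Pt n) {r s : ℝ} (h0 : 0 ≤ r) (h : r ≤ s) :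
    pcubeMinus n z r ⊆ pcubeMinus n z s := by
  intro p hp
  obtain ⟨h1, h2, h3⟩ := hp
  have hsq : r ^ 2 ≤ s ^ 2 := by nlinarith
  exact ⟨fun i => (h1 i).trans_le h, by linarith, h3⟩

lemma exists_pcube_subset (n : ℕ) (q₀ z : Pt n) (R : ℝ) (hz : z ∈ pcube n q₀ R) :
    ∃ ρ > 0, pcube n z ρ ⊆ pcube n q₀ R := by
  obtain ⟨hsp, ht1, ht2⟩ := hz
  set f : Fin n → ℝ := fun i => R - |z.1 i - q₀.1 i| with hf
  set s : Finset ℝ := insert 1 (Finset.image f Finset.univ) with hs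
  have hsne : s.Nonempty := ⟨1, Finset.mem_insert_self _ _⟩
  set m := s.min' hsne with hm
  have hmpos : 0 < m := by
    have hmem := s.min'_mem hsne
    rcases Finset.mem_insert.mp hmem with h1 | h2
    · rw [hm, h1]; norm_num
    · obtain ⟨i, _, hi⟩ := Finset.mem_image.mp h2
      rw [hm, ← hi, hf]
      have := hsp i
      simp only [sub_pos]
      exact this
  have hmf : ∀ i, m ≤ f i := fun i =>
    s.min'_le _ (Finset.mem_insert_of_mem (Finset.mem_image_of_mem f (Finset.mem_univ i)))
  set δt : ℝ := min (z.2 - (q₀.2 - R ^ 2)) ((q₀.2 + R ^ 2) - z.2) with hδt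
  have hδtpos : 0 < δt := lt_min (by linarith) (by linarith)
  refine ⟨min m (Real.sqrt δt), lt_min hmpos (Real.sqrt_pos.mpr hδtpos), ?_⟩
  set ρ := min m (Real.sqrt δt) with hρ
  have hρpos : 0 < ρ := lt_min hmpos (Real.sqrt_pos.mpr hδtpos)
  have hρsq : ρ ^ 2 ≤ δt := by
    have h1 : ρ ≤ Real.sqrt δt := min_le_right _ _
    calc ρ ^ 2 ≤ Real.sqrt δt ^ 2 := by nlinarith
    _ = δt := Real.sq_sqrt hδtpos.le
  intro p hp
  obtain ⟨h1, h2, h3⟩ := hp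
  refine ⟨fun i => ?_, ?_, ?_⟩
  · have := abs_sub (p.1 i) (z.1 i)
    have htri : |p.1 i - q₀.1 i| ≤ |p.1 i - z.1 i| + |z.1 i - q₀.1 i| := abs_sub_le _ _ _
    have h4 : |p.1 i - z.1 i| < m := (h1 i).trans_le (min_le_left _ _)
    have h5 := hmf i
    simp only [hf] at h5
    linarith
  · have : δt ≤ z.2 - (q₀.2 - R ^ 2) := min_le_left _ _
    linarith
  · have : δt ≤ (q₀.2 + R ^ 2) - z.2 := min_le_right _ _
    linarith

/-- time-backwards lower ADR rules out abnormal boundary points on `Σ ∩ Q`;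
consequently `Σ ∩ Q ⊆ 𝒫Ω` (Remark 1.10). -/
theorem statement_18 (n : ℕ) (Ω : Set (Pt n)) (hΩ : IsOpen Ω)
    (σ : Measure (Pt n)) (c : ℝ) (hc : 0 < c) (q₀ : Pt n) (R : ℝ) (hR : 0 < R)
    (hsupp : σ (quasiLateral n Ω)ᶜ = 0)
    (hback : ∀ z ∈ quasiLateral n Ω, ∀ ρ : ℝ, 0 < ρ → pcube n z ρ ⊆ pcube n q₀ R →
      ENNReal.ofReal (c * ρ ^ (n + 1)) ≤ σ (pcubeMinus n z ρ ∩ quasiLateral n Ω)) :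
    (quasiLateral n Ω ∩ pcube n q₀ R) ∩ abnormalBdry n Ω = ∅ ∧
    quasiLateral n Ω ∩ pcube n q₀ R ⊆ parabolicBdry n Ω := by
  have key : (quasiLateral n Ω ∩ pcube n q₀ R) ∩ abnormalBdry n Ω = ∅ := by
    rw [Set.eq_empty_iff_forall_notMem]
    rintro z ⟨⟨hzSig, hzQ⟩, hzfr, ε, hε, hεsub⟩
    obtain ⟨ρ₀, hρ₀, hsub⟩ := exists_pcube_subset n q₀ z R hzQ
    set ρ := min ρ₀ ε with hρdef
    have hρ : 0 < ρ := lt_min hρ₀ hε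
    have h1 : pcube n z ρ ⊆ pcube n q₀ R :=
      (pcube_mono n z hρ.le (min_le_left _ _)).trans hsub
    have h2 : pcubeMinus n z ρ ⊆ Ω :=
      (pcubeMinus_mono n z hρ.le (min_le_right _ _)).trans hεsub
    have hdisj : pcubeMinus n z ρ ∩ quasiLateral n Ω = ∅ := by
      rw [Set.eq_empty_iff_forall_notMem]
      rintro p ⟨hp1, hp2⟩
      have hfr : p ∈ frontier Ω := hp2.1
      rw [hΩ.frontier_eq] at hfr
      exact hfr.2 (h2 hp1)
    have hle := hback z hzSig ρ hρ h1
    rw [hdisj, measure_empty] at hle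
    have hpos : (0 : ℝ) < c * ρ ^ (n + 1) := by positivity
    exact absurd hle (ENNReal.ofReal_pos.mpr hpos).not_ge
  refine ⟨key, ?_⟩
  rintro z ⟨hzSig, hzQ⟩
  refine ⟨hzSig.1, fun r hr => ?_⟩
  by_contra h
  rw [Set.not_nonempty_iff_eq_empty] at h
  have hsub : pcubeMinus n z r ⊆ Ω := by
    intro p hp
    by_contra hpn
    exact Set.eq_empty_iff_forall_notMem.mp h p ⟨hp, hpn⟩
  have habn : z ∈ abnormalBdry n Ω := ⟨hzSig.1, r, hr, hsub⟩
  exact Set.eq_empty_iff_forall_notMem.mp key z ⟨⟨hzSig, hzQ⟩, habn⟩
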